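/- Let m ≥ 2 be an integer, let 𝔽 be a field, and let A, B be m×m matrices over 𝔽. Then the Kronecker product A ⊗ B (an m²×m² matrix) satisfies A ⊗ B = P · (I_m ⊗ A) · Pᵀ · (I_m ⊗ B), where P = P_{(m,m²)}. In particular, since I_m ⊗ A and I_m ⊗ B lie in BD(m, m²), A ⊗ B is a Monarch matrix (an element of M(m, m²)). -/

import Mathlib

open Matrix

/-- `BD b n R`: `R` is block-diagonal with `n/b` diagonal blocks of size `b × b`. -/
def BD {𝔽 : Type*} [Field 𝔽] (b n : ℕ) (R : Matrix (Fin n) (Fin n) 𝔽) : Prop :=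
  ∀ i j : Fin n, i.val / b ≠ j.val / b → R i j = 0

/-- `DB b n L`: `L[i,j] = 0` whenever `i ≢ j (mod b)`. -/
def DB {𝔽 : Type*} [Field 𝔽] (b n : ℕ) (L : Matrix (Fin n) (Fin n) 𝔽) : Prop :=
  ∀ i j : Fin n, i.val % b ≠ j.val % b → L i j = 0

/-- The permutation matrix `P_{(b,n)}`. -/
def permMat (𝔽 : Type*) [Field 𝔽] (b n : ℕ) : Matrix (Fin n) (Fin n) 𝔽 :=
  Matrix.of fun i j => if i.val = j.val % b * (n / b) + j.val / b then 1 else 0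

/-- The Kronecker product of two `m × m` matrices, as an `m² × m²` matrix:
`(A ⊗ B)[i₁·m + i₀, j₁·m + j₀] = A[i₁,j₁] · B[i₀,j₀]`. -/
def kron {𝔽 : Type*} [Field 𝔽] (m : ℕ) (hm : 0 < m) (A B : Matrix (Fin m) (Fin m) 𝔽) :
    Matrix (Fin (m * m)) (Fin (m * m)) 𝔽 :=
  Matrix.of fun i j =>
    A ⟨i.val / m, Nat.div_lt_of_lt_mul i.isLt⟩ ⟨j.val / m, Nat.div_lt_of_lt_mul j.isLt⟩ *
    B ⟨i.val % m, Nat.mod_lt _ hm⟩ ⟨j.val % m, Nat.mod_lt _ hm⟩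

/-!
Identify `Fin (m * m)` with pairs of base-`m` digits through `finProdFinEquiv`; then `kron` is
Mathlib's Kronecker product `⊗ₖ` reindexed, and `permMat 𝔽 m (m * m)` is the permutation matrix
of the digit swap. Conjugating by it swaps the two Kronecker factors, so
`P (I ⊗ A) Pᵀ = A ⊗ I`, and the mixed-product rule gives `(A ⊗ I) (I ⊗ B) = A ⊗ B`.
Finally `A ⊗ I` only couples indices with equal low digit and `I ⊗ B` only indices with equal
high digit.
-/

open scoped Kronecker

theorem kronecker_submatrix_swap {R ι ι' κ κ' : Type*} [CommMagma R] (A : Matrix ι ι' R)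
    (B : Matrix κ κ' R) :
    (A ⊗ₖ B).submatrix Prod.swap Prod.swap = B ⊗ₖ A := by
  ext ⟨i₁, i₀⟩ ⟨j₁, j₀⟩
  exact mul_comm _ _

section

variable {𝔽 : Type*} [Field 𝔽] {m : ℕ}

theorem kron_eq_submatrix_kronecker (hm : 0 < m) (A B : Matrix (Fin m) (Fin m) 𝔽) :
    kron m hm A B = (A ⊗ₖ B).submatrix finProdFinEquiv.symm finProdFinEquiv.symm :=
  rfl

theorem kron_mul_kron (hm : 0 < m) (A B C D : Matrix (Fin m) (Fin m) 𝔽) :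
    kron m hm A B * kron m hm C D = kron m hm (A * C) (B * D) := by
  simp only [kron_eq_submatrix_kronecker, submatrix_mul_equiv, mul_kronecker_mul]

/-- The permutation `σ_{(m,m²)}`: `i₁ * m + i₀ ↦ i₀ * m + i₁`. -/
def digitSwap (m : ℕ) : Fin (m * m) ≃ Fin (m * m) :=
  finProdFinEquiv.symm.trans ((Equiv.prodComm _ _).trans finProdFinEquiv)

theorem permMat_eq_toMatrix_digitSwap (hm : 0 < m) :
    permMat 𝔽 m (m * m) = (digitSwap m).symm.toPEquiv.toMatrix := by
  ext i j
  simp only [permMat, of_apply, PEquiv.toMatrix_apply, Equiv.toPEquiv_apply, Option.mem_def,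
    Option.some_inj, Equiv.symm_apply_eq, Fin.ext_iff, Nat.mul_div_cancel _ hm]
  simp [digitSwap, Nat.add_comm, Nat.mul_comm]

theorem permMat_mul_kron_mul_transpose (hm : 0 < m) (A B : Matrix (Fin m) (Fin m) 𝔽) :
    permMat 𝔽 m (m * m) * kron m hm A B * (permMat 𝔽 m (m * m))ᵀ = kron m hm B A := by
  rw [permMat_eq_toMatrix_digitSwap hm, ← PEquiv.toMatrix_symm, ← Equiv.toPEquiv_symm,
    Equiv.symm_symm, PEquiv.toMatrix_toPEquiv_mul, PEquiv.mul_toMatrix_toPEquiv,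
    submatrix_submatrix, kron_eq_submatrix_kronecker, kron_eq_submatrix_kronecker,
    submatrix_submatrix, ← kronecker_submatrix_swap, submatrix_submatrix]
  congr 1 <;> funext i <;> simp [digitSwap]

theorem BD_kron_one_left (hm : 0 < m) (C : Matrix (Fin m) (Fin m) 𝔽) :
    BD m (m * m) (kron m hm 1 C) := by
  intro i j hij
  simp [kron, one_apply, Fin.ext_iff, hij]

theorem DB_kron_one_right (hm : 0 < m) (C : Matrix (Fin m) (Fin m) 𝔽) :
    DB m (m * m) (kron m hm C 1) := by
  intro i j hij
  simp [kron, one_apply, Fin.ext_iff, hij]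

end

/-- `A ⊗ B = P (I ⊗ A) Pᵀ (I ⊗ B)` with `P = P_{(m, m²)}`; in particular
`I ⊗ A, I ⊗ B ∈ BD(m, m²)` and `A ⊗ B` is a Monarch matrix (in `M(m, m²)`). -/
theorem kronecker_is_monarch {𝔽 : Type*} [Field 𝔽] (m : ℕ) (hm : 2 ≤ m)
    (A B : Matrix (Fin m) (Fin m) 𝔽) :
    kron m (by omega) A B =
      permMat 𝔽 m (m * m) * kron m (by omega) 1 A * (permMat 𝔽 m (m * m))ᵀ *
        kron m (by omega) 1 B ∧
    BD m (m * m) (kron m (by omega) 1 A) ∧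
    BD m (m * m) (kron m (by omega) 1 B) ∧
    ∃ L R : Matrix (Fin (m * m)) (Fin (m * m)) 𝔽,
      DB m (m * m) L ∧ BD m (m * m) R ∧ kron m (by omega) A B = L * R := by
  have hm0 : 0 < m := by omega
  have hshuffle : kron m hm0 A B =
      permMat 𝔽 m (m * m) * kron m hm0 1 A * (permMat 𝔽 m (m * m))ᵀ * kron m hm0 1 B := by
    rw [permMat_mul_kron_mul_transpose, kron_mul_kron, mul_one, one_mul]
  refine ⟨hshuffle, BD_kron_one_left hm0 A, BD_kron_one_left hm0 B, kron m hm0 A 1,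
    kron m hm0 1 B, DB_kron_one_right hm0 A, BD_kron_one_left hm0 B, ?_⟩
  rw [kron_mul_kron, mul_one, one_mul]
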